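/- Let P : C̃ → C together with ramification numbers e be a d-fold ramified covering of small categories, let n ≥ 1, let f ∈ N_n(C) be a chain which is not a constant identity chain, and let 0 ≤ i ≤ n be such that the i-th face ∂_i f ∈ N_{n−1}(C) is also not a constant identity chain. Then the face operator ∂_i restricts to a bijection from the set of preimages of f in N_n(C̃) under P onto the set of preimages of ∂_i f in N_{n−1}(C̃) under P. -/

import Mathlib

open CategoryTheory

universe u

/-- The set of morphisms of `C` with target `x`, encoded as a sigma type. -/
abbrev Tgt (C : Type u) [SmallCategory C] (x : C) : Type u := Σ a : C, a ⟶ x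

/-- The set of morphisms of `C` with source `x`, encoded as a sigma type. -/
abbrev Src (C : Type u) [SmallCategory C] (x : C) : Type u := Σ b : C, x ⟶ b

/-- The map `T(x̃) → T(P x̃)` induced by a functor `P`. -/
def tgtMap {D C : Type u} [SmallCategory D] [SmallCategory C] (P : D ⥤ C) (x : D) :
    Tgt D x → Tgt C (P.obj x) := fun g => ⟨P.obj g.1, P.map g.2⟩

/-- The map `S(x̃) → S(P x̃)` induced by a functor `P`. -/
def srcMap {D C : Type u} [SmallCategory D] [SmallCategory C] (P : D ⥤ C) (x : D) :
    Src D x → Src C (P.obj x) := fun g => ⟨P.obj g.1, P.map g.2⟩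

/-- `P : D ⥤ C` together with ramification numbers `e` is a ramified covering:
`C` is connected, `e x ≥ 1` for all `x`, `P : T(x̃) → T(P x̃)` is bijective,
every morphism of `S̄(P x̃)` has exactly `e x̃` preimages in `S̄(x̃)`, and
`e x̃ = 1` whenever `S̄(P x̃)` is empty. -/
structure IsRamifiedCovering {D C : Type u} [SmallCategory D] [SmallCategory C]
    (P : D ⥤ C) (e : D → ℕ) : Prop where
  nonempty : Nonempty C
  zigzag : ∀ x y : C, Zigzag x y
  one_le : ∀ x : D, 1 ≤ e x
  tgt_bij : ∀ x : D, Function.Bijective (tgtMap P x)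
  src_count : ∀ (x : D) (g : Src C (P.obj x)), g ≠ ⟨P.obj x, 𝟙 (P.obj x)⟩ →
    Nat.card {h : Src D x // h ≠ ⟨x, 𝟙 x⟩ ∧ srcMap P x h = g} = e x
  ram_one : ∀ x : D, (∀ g : Src C (P.obj x), g = ⟨P.obj x, 𝟙 (P.obj x)⟩) → e x = 1

/-- `P` is a `d`-fold ramified covering: for every object `x` of `C`, the multiset
`R(x)` of objects over `x`, each counted with multiplicity its ramification number,
has cardinality `d`, i.e. `Σ_{P xt = x} e(xt) = d`. -/
def IsDFold {D C : Type u} [SmallCategory D] [SmallCategory C]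
    (P : D ⥤ C) (e : D → ℕ) (d : ℕ) : Prop :=
  ∀ x : C, Nat.card (Σ a : {a : D // P.obj a = x}, Fin (e a.1)) = d

/-- The `i`-th simplicial face operator `∂ᵢ : N_{n+1}(C) → N_n(C)` on the nerve of `C`. -/
def nerveFace (C : Type u) [SmallCategory C] (n : ℕ) (i : Fin (n + 2)) :
    ComposableArrows C (n + 1) → ComposableArrows C n :=
  (nerve C).map (SimplexCategory.δ i).op

/-!
Because `P` is bijective on morphisms with a fixed target, a lift of a chain is determined by the
lift of its last object, and any lift of the last object extends to a lift of the chain. A face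
`∂ᵢ` with `i` not the last index keeps the last object, so it is a bijection on lifts.

For the last face, each object `x` over `f(n)` must have exactly one lift of the arrow
`q : f(n) ⟶ f(n+1)` that starts at `x`. If `q` is an identity, its only lift is an identity.
If not, `f(n)` also receives a non-identity arrow `p`, because `∂f` is not constant. Let `t` be
the source of the lift of `p` that ends at `x`. Lifts of `p ≫ q` out of `t` factor uniquely
through lifts of `p`, so `∑ e v ≤ e t`, where the sum runs over the targets `v` of the `e t`
lifts of `p` out of `t`. Hence every `e v` is `1`, and in particular `e x = 1`.
-/

namespace Tgt

variable {C : Type u} [SmallCategory C]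

theorem mk_eq_mk_iff {x a b : C} (m₁ : a ⟶ x) (m₂ : b ⟶ x) :
    (⟨a, m₁⟩ : Tgt C x) = ⟨b, m₂⟩ ↔ ∃ h : a = b, m₁ = eqToHom h ≫ m₂ := by
  constructor
  · rintro ⟨⟩
    exact ⟨rfl, by simp⟩
  · rintro ⟨rfl, rfl⟩
    simp

theorem mk_eq_id_iff {x a : C} (m : a ⟶ x) :
    (⟨a, m⟩ : Tgt C x) = ⟨x, 𝟙 x⟩ ↔ ∃ h : a = x, m = eqToHom h := by
  rw [mk_eq_mk_iff]
  simp

end Tgt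

namespace Src

variable {C : Type u} [SmallCategory C]

theorem mk_eq_mk_iff {x a b : C} (m₁ : x ⟶ a) (m₂ : x ⟶ b) :
    (⟨a, m₁⟩ : Src C x) = ⟨b, m₂⟩ ↔ ∃ h : a = b, m₁ = m₂ ≫ eqToHom h.symm := by
  constructor
  · rintro ⟨⟩
    exact ⟨rfl, by simp⟩
  · rintro ⟨rfl, rfl⟩
    simp

theorem mk_eq_id_iff {x a : C} (m : x ⟶ a) :
    (⟨a, m⟩ : Src C x) = ⟨x, 𝟙 x⟩ ↔ ∃ h : x = a, m = eqToHom h := by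
  simp only [mk_eq_mk_iff, Category.id_comp]
  exact ⟨fun ⟨h, hm⟩ => ⟨h.symm, hm⟩, fun ⟨h, hm⟩ => ⟨h.symm, hm⟩⟩

end Src

theorem Tgt.mk_eq_id_iff_src {C : Type u} [SmallCategory C] {a b : C} (m : a ⟶ b) :
    (⟨a, m⟩ : Tgt C b) = ⟨b, 𝟙 b⟩ ↔ (⟨b, m⟩ : Src C a) = ⟨a, 𝟙 a⟩ := by
  rw [Tgt.mk_eq_id_iff, Src.mk_eq_id_iff]

section DiscreteFibration

variable {D C : Type u} [SmallCategory D] [SmallCategory C] {P : D ⥤ C}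

@[simp]
theorem tgtMap_mk {x z : D} (m : z ⟶ x) : tgtMap P x ⟨z, m⟩ = ⟨P.obj z, P.map m⟩ := rfl

@[simp]
theorem srcMap_mk {x z : D} (m : x ⟶ z) : srcMap P x ⟨z, m⟩ = ⟨P.obj z, P.map m⟩ := rfl

abbrev SrcLift (P : D ⥤ C) (x : D) (g : Src C (P.obj x)) : Type u :=
  {s : Src D x // srcMap P x s = g}

theorem SrcLift.obj_eq {x : D} {b : C} {p : P.obj x ⟶ b} (v : SrcLift P x ⟨b, p⟩) :
    P.obj v.1.1 = b :=
  congrArg Sigma.fst v.2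

theorem eq_id_of_srcMap_eq_id (hP : ∀ x, Function.Bijective (tgtMap P x)) {x : D} (s : Src D x)
    (hs : srcMap P x s = ⟨P.obj x, 𝟙 (P.obj x)⟩) : s = ⟨x, 𝟙 x⟩ := by
  obtain ⟨z, m⟩ := s
  obtain ⟨hz, hm⟩ := (Src.mk_eq_id_iff _).mp hs
  have key : (⟨x, m⟩ : Tgt D z) = ⟨z, 𝟙 z⟩ := by
    apply (hP z).injective
    rw [tgtMap_mk, tgtMap_mk, P.map_id, Tgt.mk_eq_id_iff]
    exact ⟨hz, hm⟩
  obtain ⟨rfl, rfl⟩ := (Tgt.mk_eq_id_iff _).mp key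
  rfl

theorem exists_factorization_of_map_eq_comp (hP : ∀ x, Function.Bijective (tgtMap P x))
    {t z : D} (m : t ⟶ z) {b : C} (p : P.obj t ⟶ b) (q : b ⟶ P.obj z)
    (hm : P.map m = p ≫ q) :
    ∃ (y : D) (hy : P.obj y = b) (m₁ : t ⟶ y) (m₂ : y ⟶ z),
      m₁ ≫ m₂ = m ∧ P.map m₁ = p ≫ eqToHom hy.symm ∧ P.map m₂ = eqToHom hy ≫ q := by
  obtain ⟨⟨y, m₂⟩, hm₂⟩ := (hP z).surjective ⟨b, q⟩
  obtain ⟨hy, hm₂⟩ := (Tgt.mk_eq_mk_iff _ _).mp hm₂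
  obtain ⟨⟨t', m₁⟩, hm₁⟩ := (hP y).surjective ⟨P.obj t, p ≫ eqToHom hy.symm⟩
  obtain ⟨ht, hm₁⟩ := (Tgt.mk_eq_mk_iff _ _).mp hm₁
  have hcomp : (⟨t', m₁ ≫ m₂⟩ : Tgt D z) = ⟨t, m⟩ := by
    apply (hP z).injective
    rw [tgtMap_mk, tgtMap_mk, Tgt.mk_eq_mk_iff, P.map_comp, hm₁, hm₂, hm]
    exact ⟨ht, by simp⟩
  obtain ⟨rfl, hcomp⟩ := (Tgt.mk_eq_mk_iff _ _).mp hcomp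
  exact ⟨y, hy, m₁, m₂, by simpa using hcomp, by simpa using hm₁, hm₂⟩

def SrcLift.comp {t : D} {b c : C} {p : P.obj t ⟶ b} {q : b ⟶ c} (v : SrcLift P t ⟨b, p⟩)
    (w : SrcLift P v.1.1 ⟨c, eqToHom v.obj_eq ≫ q⟩) : SrcLift P t ⟨c, p ≫ q⟩ :=
  ⟨⟨w.1.1, v.1.2 ≫ w.1.2⟩, by
    obtain ⟨⟨y, m⟩, hv⟩ := v
    obtain ⟨⟨z, n⟩, hw⟩ := w
    obtain ⟨hy, hm⟩ := (Src.mk_eq_mk_iff _ _).mp hv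
    obtain ⟨hz, hn⟩ := (Src.mk_eq_mk_iff _ _).mp hw
    rw [srcMap_mk, Src.mk_eq_mk_iff, P.map_comp, hm, hn]
    exact ⟨hz, by simp⟩⟩

theorem SrcLift.comp_bijective (hP : ∀ x, Function.Bijective (tgtMap P x)) {t : D} {b c : C}
    (p : P.obj t ⟶ b) (q : b ⟶ c) :
    Function.Bijective fun vw : Σ v : SrcLift P t ⟨b, p⟩,
        SrcLift P v.1.1 ⟨c, eqToHom v.obj_eq ≫ q⟩ => vw.1.comp vw.2 := by
  constructor
  · rintro ⟨⟨⟨y₁, m₁⟩, hv₁⟩, ⟨⟨z₁, n₁⟩, hw₁⟩⟩ ⟨⟨⟨y₂, m₂⟩, hv₂⟩, ⟨⟨z₂, n₂⟩, hw₂⟩⟩ heq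
    obtain rfl : z₁ = z₂ := congrArg (·.1.1) heq
    obtain ⟨hy₁, -⟩ := (Src.mk_eq_mk_iff _ _).mp hv₁
    obtain ⟨hy₂, -⟩ := (Src.mk_eq_mk_iff _ _).mp hv₂
    obtain ⟨_, hn₁⟩ := (Src.mk_eq_mk_iff _ _).mp hw₁
    obtain ⟨_, hn₂⟩ := (Src.mk_eq_mk_iff _ _).mp hw₂
    have hn : (⟨y₁, n₁⟩ : Tgt D z₁) = ⟨y₂, n₂⟩ := by
      apply (hP z₁).injective
      rw [tgtMap_mk, tgtMap_mk, Tgt.mk_eq_mk_iff, hn₁, hn₂]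
      exact ⟨hy₁.trans hy₂.symm, by simp⟩
    cases hn
    have hm : (⟨t, m₁⟩ : Tgt D y₁) = ⟨t, m₂⟩ := by
      apply (hP y₁).injective
      rw [tgtMap_mk, tgtMap_mk, sigma_mk_injective (hv₁.trans hv₂.symm)]
    cases hm
    rfl
  · rintro ⟨⟨z, m⟩, hm⟩
    obtain ⟨rfl, hm⟩ := (Src.mk_eq_mk_iff _ _).mp hm
    obtain ⟨y, hy, m₁, m₂, rfl, hm₁, hm₂⟩ :=
      exists_factorization_of_map_eq_comp hP m p q (by simpa using hm)
    have hv : srcMap P t ⟨y, m₁⟩ = ⟨b, p⟩ := (Src.mk_eq_mk_iff _ _).mpr ⟨hy, hm₁⟩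
    exact ⟨⟨⟨_, hv⟩, ⟨⟨z, m₂⟩, (Src.mk_eq_mk_iff _ _).mpr ⟨rfl, by simpa using hm₂⟩⟩⟩, rfl⟩

end DiscreteFibration

theorem card_eq_one_of_card_sigma_le {V : Type*} {W : V → Type*} [Finite V]
    (hW : ∀ v, Nat.card (W v) ≠ 0) (hle : Nat.card (Σ v, W v) ≤ Nat.card V) (v : V) :
    Nat.card (W v) = 1 := by
  have := fun v => (Nat.card_ne_zero.mp (hW v)).2
  cases nonempty_fintype V
  rw [Nat.card_sigma, Nat.card_eq_fintype_card, Fintype.card_eq_sum_ones] at hle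
  by_contra hv
  have hlt : ∑ _ : V, 1 < ∑ v, Nat.card (W v) :=
    Finset.sum_lt_sum (fun v _ => Nat.one_le_iff_ne_zero.mpr (hW v))
      ⟨v, Finset.mem_univ v, by have := hW v; omega⟩
  omega

namespace IsRamifiedCovering

variable {D C : Type u} [SmallCategory D] [SmallCategory C] {P : D ⥤ C} {e : D → ℕ}

theorem card_srcLift (h : IsRamifiedCovering P e) {x : D} {g : Src C (P.obj x)}
    (hg : g ≠ ⟨P.obj x, 𝟙 (P.obj x)⟩) : Nat.card (SrcLift P x g) = e x := by
  rw [← h.src_count x g hg]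
  refine Nat.card_congr (Equiv.subtypeEquivRight fun s => ⟨fun hs => ⟨?_, hs⟩, And.right⟩)
  rintro rfl
  exact hg (by simp [← hs])

theorem card_srcLift_le (h : IsRamifiedCovering P e) (x : D) (g : Src C (P.obj x)) :
    Nat.card (SrcLift P x g) ≤ e x := by
  by_cases hg : g = ⟨P.obj x, 𝟙 (P.obj x)⟩
  · subst hg
    have : Subsingleton (SrcLift P x ⟨P.obj x, 𝟙 (P.obj x)⟩) :=
      ⟨fun s₁ s₂ => Subtype.ext <| (eq_id_of_srcMap_eq_id h.tgt_bij _ s₁.2).trans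
        (eq_id_of_srcMap_eq_id h.tgt_bij _ s₂.2).symm⟩
    exact (Finite.card_le_one_iff_subsingleton.mpr this).trans (h.one_le x)
  · exact (h.card_srcLift hg).le

theorem ramification_eq_one (h : IsRamifiedCovering P e) {a b c : C} (p : a ⟶ b) (q : b ⟶ c)
    (hp : (⟨a, p⟩ : Tgt C b) ≠ ⟨b, 𝟙 b⟩) (hq : (⟨c, q⟩ : Src C b) ≠ ⟨b, 𝟙 b⟩)
    {x : D} (hx : P.obj x = b) : e x = 1 := by
  subst hx
  obtain ⟨⟨t, pt⟩, hpt⟩ := (h.tgt_bij x).surjective ⟨a, p⟩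
  obtain ⟨rfl, hpt⟩ := (Tgt.mk_eq_mk_iff _ _).mp hpt
  have hp' : (⟨P.obj x, p⟩ : Src C (P.obj t)) ≠ ⟨P.obj t, 𝟙 (P.obj t)⟩ :=
    fun hid => hp ((Tgt.mk_eq_id_iff_src p).mpr hid)
  have hq' (v : SrcLift P t ⟨P.obj x, p⟩) :
      (⟨c, eqToHom v.obj_eq ≫ q⟩ : Src C (P.obj v.1.1)) ≠ ⟨P.obj v.1.1, 𝟙 (P.obj v.1.1)⟩ := by
    intro hv
    obtain ⟨hc, hqid⟩ := (Src.mk_eq_id_iff _).mp hv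
    refine hq ((Src.mk_eq_id_iff _).mpr ⟨v.obj_eq.symm.trans hc, ?_⟩)
    rw [← cancel_epi (eqToHom v.obj_eq), hqid, eqToHom_trans]
  have hV : Nat.card (SrcLift P t ⟨P.obj x, p⟩) = e t := h.card_srcLift hp'
  have : Finite (SrcLift P t ⟨P.obj x, p⟩) :=
    (Nat.card_ne_zero.mp (by have := h.one_le t; omega)).2
  let v₀ : SrcLift P t ⟨P.obj x, p⟩ := ⟨⟨x, pt⟩, by simp [hpt]⟩
  have hW := card_eq_one_of_card_sigma_le
    (W := fun v => SrcLift P v.1.1 ⟨c, eqToHom v.obj_eq ≫ q⟩)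
    (fun v => by rw [h.card_srcLift (hq' v)]; have := h.one_le v.1.1; omega)
    (by rw [Nat.card_eq_of_bijective _ (SrcLift.comp_bijective h.tgt_bij p q), hV]
        exact h.card_srcLift_le t _) v₀
  rwa [h.card_srcLift (hq' v₀)] at hW

theorem existsUnique_srcMap_eq (h : IsRamifiedCovering P e) {a b : C} (p : a ⟶ b)
    (hp : (⟨a, p⟩ : Tgt C b) ≠ ⟨b, 𝟙 b⟩) {x : D} (hx : P.obj x = b) (g : Src C (P.obj x)) :
    ∃! s : Src D x, srcMap P x s = g := by
  subst hx
  by_cases hg : g = ⟨P.obj x, 𝟙 (P.obj x)⟩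
  · subst hg
    exact ⟨⟨x, 𝟙 x⟩, by simp, eq_id_of_srcMap_eq_id h.tgt_bij⟩
  · obtain ⟨c, q⟩ := g
    have hcard : Nat.card (SrcLift P x ⟨c, q⟩) = 1 := by
      rw [h.card_srcLift hg, h.ramification_eq_one p q hp hg rfl]
    obtain ⟨_, ⟨s⟩⟩ := Nat.card_eq_one_iff_unique.mp hcard
    exact ⟨s.1, s.2, fun s' hs' => congrArg Subtype.val (Subsingleton.elim ⟨s', hs'⟩ s)⟩

end IsRamifiedCovering

section Chains

variable {D C : Type u} [SmallCategory D] [SmallCategory C] {P : D ⥤ C}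

theorem tgtMap_map_comp_eqToHom_of_comp_eq {I : Type*} [Category I] {g : I ⥤ D} {f : I ⥤ C}
    (hg : g ⋙ P = f) {i j : I} (φ : i ⟶ j) {z : D} (hz : g.obj j = z) :
    tgtMap P z ⟨g.obj i, g.map φ ≫ eqToHom hz⟩ =
      ⟨f.obj i, f.map φ ≫ eqToHom ((Functor.congr_obj hg j).symm.trans (congrArg P.obj hz))⟩ := by
  subst hg hz
  simp

theorem srcMap_eqToHom_comp_map_of_comp_eq {I : Type*} [Category I] {g : I ⥤ D} {f : I ⥤ C}
    (hg : g ⋙ P = f) {i j : I} (φ : i ⟶ j) {x : D} (hx : x = g.obj i) :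
    srcMap P x ⟨g.obj j, eqToHom hx ≫ g.map φ⟩ =
      ⟨f.obj j, eqToHom ((congrArg P.obj hx).trans (Functor.congr_obj hg i)) ≫ f.map φ⟩ := by
  subst hg hx
  simp

namespace CategoryTheory.ComposableArrows

theorem ext_of_comp_eq_of_obj_last (hP : ∀ x, Function.Bijective (tgtMap P x)) {m : ℕ}
    {g₁ g₂ : ComposableArrows D m} (hg : g₁ ⋙ P = g₂ ⋙ P)
    (hlast : g₁.obj (Fin.last m) = g₂.obj (Fin.last m)) : g₁ = g₂ := by
  induction m with
  | zero => exact ext₀ hlast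
  | succ m ih =>
    have hδ₀ : g₁.δ₀ = g₂.δ₀ :=
      ih (congrArg δ₀ hg) (by rwa [← Fin.succ_last] at hlast)
    have h₁ : g₁.obj' 1 = g₂.obj' 1 := Functor.congr_obj hδ₀ 0
    have hfirst : (⟨g₁.obj' 0, g₁.map' 0 1 ≫ eqToHom h₁⟩ : Tgt D (g₂.obj' 1)) =
        ⟨g₂.obj' 0, g₂.map' 0 1 ≫ eqToHom rfl⟩ :=
      (hP _).injective ((tgtMap_map_comp_eqToHom_of_comp_eq hg _ h₁).trans
        (tgtMap_map_comp_eqToHom_of_comp_eq rfl _ rfl).symm)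
    obtain ⟨h₀, hmap⟩ := (Tgt.mk_eq_mk_iff _ _).mp hfirst
    exact ext_succ h₀ hδ₀ (((comp_eqToHom_iff _ _ _).mp hmap).trans (by
      simp only [obj', map', eqToHom_refl, Category.id_comp, Category.assoc]
      rfl))

theorem exists_comp_eq_of_obj_last (hP : ∀ x, Function.Bijective (tgtMap P x)) {m : ℕ}
    (f : ComposableArrows C m) (y : D) (hy : P.obj y = f.obj (Fin.last m)) :
    ∃ g : ComposableArrows D m, g ⋙ P = f ∧ g.obj (Fin.last m) = y := by
  induction m with
  | zero => exact ⟨mk₀ y, ext₀ hy, rfl⟩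
  | succ m ih =>
    obtain ⟨g, hg, hglast⟩ := ih f.δ₀ (by rwa [← Fin.succ_last] at hy)
    obtain ⟨⟨w, u⟩, hu⟩ := (hP g.left).surjective
      ⟨f.obj' 0, f.map' 0 1 ≫ eqToHom (Functor.congr_obj hg 0).symm⟩
    obtain ⟨hw, hu⟩ := (Tgt.mk_eq_mk_iff _ _).mp hu
    exact ⟨g.precomp u, ext_succ hw hg hu, hglast⟩

theorem exists_tgt_ne_id_of_ne_const {m : ℕ} (F : ComposableArrows C m)
    (hF : ∀ x : C, F ≠ (Functor.const (Fin (m + 1))).obj x) :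
    ∃ t : Tgt C (F.obj (Fin.last m)), t ≠ ⟨F.obj (Fin.last m), 𝟙 _⟩ := by
  by_contra! hid
  choose hobj hmap using fun j => (Tgt.mk_eq_id_iff _).mp (hid ⟨_, F.map (homOfLE (Fin.le_last j))⟩)
  refine hF (F.obj (Fin.last m)) (Functor.ext hobj fun j k φ => ?_)
  have hφ : F.map φ ≫ eqToHom (hobj k) = eqToHom (hobj j) := by
    rw [← hmap, ← hmap, ← F.map_comp]
    rfl
  rw [← hφ]
  simp

end CategoryTheory.ComposableArrows

end Chains

section Faces

variable {D C : Type u} [SmallCategory D] [SmallCategory C] {P : D ⥤ C}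

theorem nerveFace_obj {n : ℕ} (i : Fin (n + 2)) (g : ComposableArrows D (n + 1)) (j : Fin (n + 1)) :
    (nerveFace D n i g).obj j = g.obj (i.succAbove j) := rfl

theorem nerveFace_comp {n : ℕ} (i : Fin (n + 2)) (g : ComposableArrows D (n + 1)) :
    nerveFace D n i g ⋙ P = nerveFace C n i (g ⋙ P) := rfl

theorem mapsTo_nerveFace {n : ℕ} (i : Fin (n + 2)) (f : ComposableArrows C (n + 1)) :
    Set.MapsTo (nerveFace D n i) {g | g ⋙ P = f} {g' | g' ⋙ P = nerveFace C n i f} :=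
  fun g hg => (nerveFace_comp i g).trans (congrArg _ hg)

theorem bijOn_nerveFace_of_ne_last (hP : ∀ x, Function.Bijective (tgtMap P x)) {n : ℕ}
    {i : Fin (n + 2)} (hi : i ≠ Fin.last (n + 1)) (f : ComposableArrows C (n + 1)) :
    Set.BijOn (nerveFace D n i) {g | g ⋙ P = f} {g' | g' ⋙ P = nerveFace C n i f} := by
  have hlast : i.succAbove (Fin.last n) = Fin.last (n + 1) := Fin.succAbove_ne_last_last hi
  refine ⟨mapsTo_nerveFace i f, fun g₁ hg₁ g₂ hg₂ heq => ?_, fun g' hg' => ?_⟩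
  · refine ComposableArrows.ext_of_comp_eq_of_obj_last hP (hg₁.trans hg₂.symm) ?_
    simpa only [nerveFace_obj, hlast] using Functor.congr_obj heq (Fin.last n)
  · obtain ⟨g, hg, hglast⟩ := ComposableArrows.exists_comp_eq_of_obj_last hP f
      (g'.obj (Fin.last n)) <| by
        simpa only [Functor.comp_obj, nerveFace_obj, hlast] using Functor.congr_obj hg' (Fin.last n)
    refine ⟨g, hg, ComposableArrows.ext_of_comp_eq_of_obj_last hP ?_ ?_⟩
    · exact (mapsTo_nerveFace i f hg).trans hg'.symm
    · rwa [nerveFace_obj, hlast]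

theorem bijOn_nerveFace_last (hP : ∀ x, Function.Bijective (tgtMap P x)) {n : ℕ}
    (f : ComposableArrows C (n + 1))
    (huniq : ∀ x : D, P.obj x = f.obj (Fin.last n).castSucc →
      ∀ g : Src C (P.obj x), ∃! s : Src D x, srcMap P x s = g) :
    Set.BijOn (nerveFace D n (Fin.last (n + 1))) {g | g ⋙ P = f}
      {g' | g' ⋙ P = nerveFace C n (Fin.last (n + 1)) f} := by
  let φ : (Fin.last n).castSucc ⟶ Fin.last (n + 1) := homOfLE (Fin.le_last _)
  refine ⟨mapsTo_nerveFace _ f, fun g₁ hg₁ g₂ hg₂ heq => ?_, fun g' hg' => ?_⟩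
  · have hx : g₁.obj (Fin.last n).castSucc = g₂.obj (Fin.last n).castSucc := by
      simpa only [nerveFace_obj, Fin.succAbove_last] using Functor.congr_obj heq (Fin.last n)
    have hs := (huniq _ (Functor.congr_obj hg₁ _) _).unique
      (srcMap_eqToHom_comp_map_of_comp_eq hg₁ φ rfl) (srcMap_eqToHom_comp_map_of_comp_eq hg₂ φ hx)
    exact ComposableArrows.ext_of_comp_eq_of_obj_last hP (hg₁.trans hg₂.symm)
      (congrArg Sigma.fst hs)
  · have hx : P.obj (g'.obj (Fin.last n)) = f.obj (Fin.last n).castSucc := by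
      simpa only [Functor.comp_obj, nerveFace_obj, Fin.succAbove_last] using
        Functor.congr_obj hg' (Fin.last n)
    obtain ⟨⟨y, u⟩, hu, -⟩ := huniq _ hx ⟨f.obj (Fin.last (n + 1)), eqToHom hx ≫ f.map φ⟩
    obtain ⟨hy, hu⟩ := (Src.mk_eq_mk_iff _ _).mp hu
    obtain ⟨g, hg, hglast⟩ := ComposableArrows.exists_comp_eq_of_obj_last hP f y hy
    have hgx : (⟨g.obj (Fin.last n).castSucc, g.map φ ≫ eqToHom hglast⟩ : Tgt D y) =
        ⟨g'.obj (Fin.last n), u⟩ := by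
      apply (hP y).injective
      rw [tgtMap_map_comp_eqToHom_of_comp_eq hg, tgtMap_mk, hu, Tgt.mk_eq_mk_iff]
      exact ⟨hx.symm, by simp⟩
    refine ⟨g, hg, ComposableArrows.ext_of_comp_eq_of_obj_last hP ?_ ?_⟩
    · exact (mapsTo_nerveFace _ f hg).trans hg'.symm
    · simpa only [nerveFace_obj, Fin.succAbove_last] using congrArg Sigma.fst hgx

end Faces

theorem ramifiedCovering_face_bijOn_general {D C : Type u}
    [SmallCategory D] [SmallCategory C]
    (P : D ⥤ C) (e : D → ℕ)
    (h : IsRamifiedCovering P e)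
    (n : ℕ) (i : Fin (n + 2)) (f : ComposableArrows C (n + 1))
    (hface : ∀ x : C, nerveFace C n i f ≠ (Functor.const (Fin (n + 1))).obj x) :
    Set.BijOn (nerveFace D n i)
      {g : ComposableArrows D (n + 1) | g ⋙ P = f}
      {g' : ComposableArrows D n | g' ⋙ P = nerveFace C n i f} := by
  by_cases hi : i = Fin.last (n + 1)
  · subst hi
    obtain ⟨⟨a, p⟩, hp⟩ := (nerveFace C n _ f).exists_tgt_ne_id_of_ne_const hface
    refine bijOn_nerveFace_last h.tgt_bij f fun x hx => h.existsUnique_srcMap_eq p hp ?_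
    rw [hx, nerveFace_obj, Fin.succAbove_last]
  · exact bijOn_nerveFace_of_ne_last h.tgt_bij hi f

/-- Let `P` be a `d`-fold ramified covering, `f ∈ N_{n+1}(C)` a chain
which is not a constant identity chain and `i` such that `∂ᵢ f` is not a constant
identity chain either. Then `∂ᵢ` restricts to a bijection from the set of preimages of
`f` in `N_{n+1}(C̃)` under `P` onto the set of preimages of `∂ᵢ f` in `N_n(C̃)`. -/
theorem ramifiedCovering_face_bijOn {D C : Type u}
    [SmallCategory D] [SmallCategory C]
    (P : D ⥤ C) (e : D → ℕ) (d : ℕ)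
    (h : IsRamifiedCovering P e) (hd : IsDFold P e d)
    (n : ℕ) (i : Fin (n + 2)) (f : ComposableArrows C (n + 1))
    (hf : ∀ x : C, f ≠ (Functor.const (Fin (n + 2))).obj x)
    (hface : ∀ x : C, nerveFace C n i f ≠ (Functor.const (Fin (n + 1))).obj x) :
    Set.BijOn (nerveFace D n i)
      {g : ComposableArrows D (n + 1) | g ⋙ P = f}
      {g' : ComposableArrows D n | g' ⋙ P = nerveFace C n i f} :=
  ramifiedCovering_face_bijOn_general P e h n i f hface
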